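/- arXiv:2103.11638 — 4 statements merged into one kernel-verified Lean document; each statement's English description precedes it below -/
import Mathlib

section
/- For distinct indices i ≠ j in {1,…,l}, if b_{ij} = 2 then the characteristic polynomial of M_i M_j is (X − 1)^l, the matrix M_i M_j is not the identity matrix, and M_i M_j is not diagonalizable; in particular 1 is its only eigenvalue. -/
/-!
When `b i j = b j i = 2`, the product `M i * M j` is unipotent: `N = M i * M j - 1` maps `ℝ^l`
into `span {e i, e j}`, sends `e i ↦ 2 (e i + e j)` and `e j ↦ -2 (e i + e j)`, and kills the
`B`-isotropic vector `e i + e j`, so `N ^ 3 = 0`. A unipotent matrix has characteristic polynomial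
`(X - 1) ^ l` and no eigenvalue other than `1`, and a diagonalizable unipotent matrix is the
identity; `M i * M j` is not, as its `(i, j)` entry is `-b i j`.
-/

open Matrix Finset Polynomial

/-- The Gram matrix `B` with `B i i = 1` and `B i k = -(b i k)/2` for `i ≠ k`. -/
noncomputable def gramB (l : ℕ) (b : Fin l → Fin l → ℝ) : Matrix (Fin l) (Fin l) ℝ :=
  fun i k => if i = k then 1 else -(b i k) / 2

/-- The matrix `M j` of the reflection `σ j (w) = w - 2⟨w, e j⟩_B e j`: it agrees with
the identity except in row `j`, where `(M j) j j = -1` and `(M j) j k = b j k` for `k ≠ j`. -/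
noncomputable def reflM (l : ℕ) (b : Fin l → Fin l → ℝ) (j : Fin l) :
    Matrix (Fin l) (Fin l) ℝ :=
  fun r c => if r = j then (if c = j then -1 else b j c) else (if r = c then 1 else 0)

namespace Matrix

variable {n R : Type*} [Fintype n] [DecidableEq n]

/-- `N` maps into `span {e i, e j}` and acts there by the square-zero block `!![a, -a; a, -a]`. -/
theorem pow_three_eq_zero_of_two_rows [Ring R] {N : Matrix n n R} {i j : n} (hij : i ≠ j)
    (hrow : ∀ r, r ≠ i → r ≠ j → N r = 0) (hcol : ∀ r, N r j = -N r i) (hi : N i i = N j i) :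
    N ^ 3 = 0 := by
  have hmul (M : Matrix n n R) (r c : n) : (M * N) r c = M r i * N i c + M r j * N j c := by
    rw [mul_apply, Fintype.sum_eq_add i j hij]
    rintro k ⟨hki, hkj⟩
    simp [hrow k hki hkj]
  have hsq_i (r : n) : (N * N) r i = 0 := by
    rw [hmul, hcol, hi, neg_mul, add_neg_cancel]
  have hsq_j (r : n) : (N * N) r j = 0 := by
    rw [mul_apply]
    simp_rw [hcol, mul_neg, sum_neg_distrib]
    rw [← mul_apply, hsq_i, neg_zero]
  ext r c
  rw [pow_three', hmul, hsq_i, hsq_j, zero_mul, zero_mul, add_zero, zero_apply]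

theorem charpoly_eq_X_pow_of_isNilpotent [CommRing R] [IsDomain R] {N : Matrix n n R}
    (hN : IsNilpotent N) : N.charpoly = X ^ Fintype.card n :=
  sub_eq_zero.mp (isNilpotent_charpoly_sub_pow_of_isNilpotent hN).eq_zero

theorem charpoly_eq_X_sub_one_pow_of_isNilpotent_sub_one [CommRing R] [IsDomain R]
    {A : Matrix n n R} (hA : IsNilpotent (A - 1)) : A.charpoly = (X - 1) ^ Fintype.card n := by
  have h := charpoly_sub_scalar A 1
  rw [scalar_apply, diagonal_one, charpoly_eq_X_pow_of_isNilpotent hA] at h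
  calc A.charpoly = (A.charpoly.comp (X + C 1)).comp (X - 1) := by
        rw [comp_assoc]; simp
    _ = (X - 1) ^ Fintype.card n := by rw [← h]; simp

theorem eq_one_of_isNilpotent_sub_one_of_eq_conj_diagonal [CommRing R] [IsReduced R]
    {A P : Matrix n n R} {d : n → R} (hA : IsNilpotent (A - 1)) (hP : IsUnit P.det)
    (hAP : A = P * diagonal d * P⁻¹) : A = 1 := by
  obtain ⟨u, rfl⟩ := (isUnit_iff_isUnit_det P).mpr hP
  rw [← coe_units_inv] at hAP
  have hconj : A - 1 = (u : Matrix n n R) * diagonal (d - 1) * (↑u⁻¹ : Matrix n n R) := by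
    rw [hAP, show d - 1 = fun i => d i - (1 : n → R) i from rfl, ← diagonal_sub, diagonal_one',
      mul_sub, sub_mul, mul_one, Units.mul_inv]
  have hd : IsNilpotent (d - 1) := by
    obtain ⟨k, hk⟩ := hA
    refine ⟨k, diagonal_injective ?_⟩
    rwa [hconj, Units.conj_pow, Units.mul_inv_eq_iff_eq_mul, zero_mul,
      Units.mul_right_eq_zero, diagonal_pow, ← diagonal_zero] at hk
  rw [hAP, sub_eq_zero.mp hd.eq_zero, diagonal_one', mul_one, Units.mul_inv]

theorem eq_one_of_hasEigenvalue_toLin' [CommRing R] [IsDomain R] {A : Matrix n n R}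
    (hA : A.charpoly = (X - 1) ^ Fintype.card n) {μ : R}
    (hμ : Module.End.HasEigenvalue A.toLin' μ) : μ = 1 := by
  rw [Module.End.hasEigenvalue_iff_isRoot_charpoly, charpoly_toLin', hA] at hμ
  exact sub_eq_zero.mp (eq_zero_of_pow_eq_zero (by simpa using hμ))

end Matrix

section reflM

variable {l : ℕ} {b : Fin l → Fin l → ℝ}

theorem reflM_row_of_ne {k r : Fin l} (h : r ≠ k) : reflM l b k r = (1 : Matrix _ _ ℝ) r := by
  ext c
  simp [reflM, h, one_apply]

theorem reflM_mul_row_of_ne {k r : Fin l} (h : r ≠ k) (X : Matrix (Fin l) (Fin l) ℝ) :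
    (reflM l b k * X) r = X r := by
  ext c
  rw [mul_apply]
  simp [reflM_row_of_ne h, one_apply]

theorem reflM_mulVec_single_self (k : Fin l) :
    reflM l b k *ᵥ Pi.single k 1 = -Pi.single k 1 := by
  ext r
  by_cases h : r = k <;> simp [reflM, h]

theorem reflM_mulVec_single_of_ne {k m : Fin l} (h : m ≠ k) :
    reflM l b k *ᵥ Pi.single m 1 = Pi.single m 1 + b k m • Pi.single k 1 := by
  ext r
  by_cases hr : r = k
  · subst hr; simp [reflM, h, Ne.symm h]
  · by_cases hm : r = m <;> simp [reflM, hr, hm, h]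

variable {i j : Fin l}

theorem reflM_mul_reflM_mulVec_single_left (hij : i ≠ j) :
    (reflM l b i * reflM l b j) *ᵥ Pi.single i 1 =
      (b i j * b j i - 1) • Pi.single i 1 + b j i • Pi.single j 1 := by
  rw [← mulVec_mulVec, reflM_mulVec_single_of_ne hij, mulVec_add, mulVec_smul,
    reflM_mulVec_single_self, reflM_mulVec_single_of_ne hij.symm]
  module

theorem reflM_mul_reflM_mulVec_single_right (hij : i ≠ j) :
    (reflM l b i * reflM l b j) *ᵥ Pi.single j 1 = -Pi.single j 1 - b i j • Pi.single i 1 := by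
  rw [← mulVec_mulVec, reflM_mulVec_single_self, mulVec_neg,
    reflM_mulVec_single_of_ne hij.symm]
  module

theorem reflM_mul_reflM_sub_one_pow_three (hij : i ≠ j) (hb : b i j = 2) (hb' : b j i = 2) :
    (reflM l b i * reflM l b j - 1) ^ 3 = 0 := by
  set N := reflM l b i * reflM l b j - 1
  have hcol (c : Fin l) :
      N.col c = (reflM l b i * reflM l b j) *ᵥ Pi.single c 1 - Pi.single c 1 := by
    rw [← mulVec_single_one, sub_mulVec, one_mulVec]
  have hcol_i : N.col i = (2 : ℝ) • (Pi.single i 1 + Pi.single j 1) := by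
    rw [hcol, reflM_mul_reflM_mulVec_single_left hij, hb, hb']
    module
  have hcol_j : N.col j = -N.col i := by
    rw [hcol_i, hcol, reflM_mul_reflM_mulVec_single_right hij, hb]
    module
  refine pow_three_eq_zero_of_two_rows hij (fun r hri hrj => ?_) (fun r => congrFun hcol_j r) ?_
  · change (reflM l b i * reflM l b j) r - (1 : Matrix _ _ ℝ) r = 0
    rw [reflM_mul_row_of_ne hri, reflM_row_of_ne hrj, sub_self]
  · have hi := congrFun hcol_i i
    have hj := congrFun hcol_i j
    simp only [col_apply] at hi hj
    simp [hi, hj, hij, hij.symm]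

theorem reflM_mul_reflM_ne_one (hij : i ≠ j) (hb : b i j ≠ 0) :
    reflM l b i * reflM l b j ≠ 1 := by
  intro h
  have hi := congrFun (reflM_mul_reflM_mulVec_single_right (b := b) hij) i
  rw [h, one_mulVec] at hi
  simp [hij] at hi
  exact hb hi

end reflM

theorem reflM_mul_of_eq_two_general (l : ℕ) (b : Fin l → Fin l → ℝ)
    (hsym : ∀ i j, i ≠ j → b i j = b j i)
    (i j : Fin l) (hij : i ≠ j) (heq : b i j = 2) :
    (reflM l b i * reflM l b j).charpoly = (X - 1) ^ l ∧
    reflM l b i * reflM l b j ≠ 1 ∧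
    ¬ (∃ (P : Matrix (Fin l) (Fin l) ℝ) (d : Fin l → ℝ),
        IsUnit P.det ∧ reflM l b i * reflM l b j = P * Matrix.diagonal d * P⁻¹) ∧
    (∀ μ : ℝ, Module.End.HasEigenvalue (Matrix.toLin' (reflM l b i * reflM l b j)) μ →
      μ = 1) := by
  have hnil : IsNilpotent (reflM l b i * reflM l b j - 1) :=
    ⟨3, reflM_mul_reflM_sub_one_pow_three hij heq ((hsym i j hij).symm.trans heq)⟩
  have hchar := charpoly_eq_X_sub_one_pow_of_isNilpotent_sub_one hnil
  rw [Fintype.card_fin] at hchar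
  have hne := reflM_mul_reflM_ne_one (b := b) hij (by norm_num [heq])
  exact ⟨hchar, hne, fun ⟨_, _, hP, hAP⟩ =>
    hne (eq_one_of_isNilpotent_sub_one_of_eq_conj_diagonal hnil hP hAP),
    fun _ hμ => eq_one_of_hasEigenvalue_toLin' (by rwa [Fintype.card_fin]) hμ⟩

/-- **The product of two reflections when `b i j = 2`.**
The characteristic polynomial of `M i * M j` is `(X - 1) ^ l`, the matrix `M i * M j`
is not the identity and is not diagonalizable; in particular `1` is its only eigenvalue. -/
theorem reflM_mul_of_eq_two (l : ℕ) (hl : 2 ≤ l) (b : Fin l → Fin l → ℝ)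
    (hsym : ∀ i j, i ≠ j → b i j = b j i) (hge : ∀ i j, i ≠ j → 2 ≤ b i j)
    (i j : Fin l) (hij : i ≠ j) (heq : b i j = 2) :
    (reflM l b i * reflM l b j).charpoly = (X - 1) ^ l ∧
    reflM l b i * reflM l b j ≠ 1 ∧
    ¬ (∃ (P : Matrix (Fin l) (Fin l) ℝ) (d : Fin l → ℝ),
        IsUnit P.det ∧ reflM l b i * reflM l b j = P * Matrix.diagonal d * P⁻¹) ∧
    (∀ μ : ℝ, Module.End.HasEigenvalue (Matrix.toLin' (reflM l b i * reflM l b j)) μ →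
      μ = 1) :=
  reflM_mul_of_eq_two_general l b hsym i j hij heq
end

section
/- Let J ⊆ {1,…,l} be nonempty. Then the subgroup W_J of GL_l(ℝ) generated by {M_j : j ∈ J} is isomorphic to the free product of |J| copies of ℤ/2ℤ, via the map sending the j-th canonical generator to M_j. Equivalently: M_j² is the identity for every j ∈ J, and no product M_{j_1} M_{j_2} ⋯ M_{j_r} with r ≥ 1, all j_t ∈ J, and j_t ≠ j_{t+1} for 1 ≤ t < r, equals the identity matrix. -/
open Matrix Finset

lemma reflM_mulVec (l : ℕ) (b : Fin l → Fin l → ℝ) (j : Fin l) (v : Fin l → ℝ) (k : Fin l) :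
    (reflM l b j).mulVec v k =
      if k = j then -(v j) + ∑ c ∈ Finset.univ.erase j, b j c * v c else v k := by
  simp only [Matrix.mulVec, dotProduct, reflM]
  by_cases h : k = j
  · subst h
    simp only [if_pos rfl, if_true, eq_self_iff_true]
    rw [← Finset.add_sum_erase _ _ (Finset.mem_univ k), if_pos rfl,
      Finset.sum_congr rfl (fun c hc => by rw [if_neg (Finset.ne_of_mem_erase hc)])]
    ring
  · simp only [if_neg h]
    rw [← Finset.add_sum_erase _ _ (Finset.mem_univ k), if_pos rfl, one_mul,
      Finset.sum_congr rfl (fun c hc => by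
        rw [if_neg (Ne.symm (Finset.ne_of_mem_erase hc)), zero_mul]),
      Finset.sum_const_zero, add_zero]

lemma key (l : ℕ) (b : Fin l → Fin l → ℝ) (hge : ∀ i j, i ≠ j → 2 ≤ b i j) :
    ∀ (L : List (Fin l)) (j1 : Fin l), (j1 :: L).Chain' (· ≠ ·) →
    ∀ jr : Fin l, (j1 :: L).getLast? = some jr →
    ∀ v : Fin l → ℝ,
      v = ((j1 :: L).map (reflM l b)).prod.mulVec (Pi.single jr (-1 : ℝ)) →
      (∀ k, 0 ≤ v k) ∧ 1 + ∑ k ∈ Finset.univ.erase j1, v k ≤ v j1 := by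
  intro L
  induction L with
  | nil =>
    intro j1 _ jr hjr v hv
    have hjr2 : j1 = jr := by simpa using hjr
    subst hjr2
    have hv' : ∀ k, v k = (Pi.single j1 (1 : ℝ) : Fin l → ℝ) k := by
      intro k
      rw [hv]
      simp only [List.map_cons, List.map_nil, List.prod_cons, List.prod_nil, mul_one]
      rw [reflM_mulVec]
      by_cases h : k = j1
      · subst h
        rw [if_pos rfl, Finset.sum_congr rfl (fun c hc => by
          rw [Pi.single_eq_of_ne (Finset.ne_of_mem_erase hc), mul_zero]),
          Finset.sum_const_zero]
        simp
      · rw [if_neg h, Pi.single_eq_of_ne h, Pi.single_eq_of_ne h]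
    constructor
    · intro k; rw [hv' k]
      by_cases h : k = j1
      · subst h; simp
      · rw [Pi.single_eq_of_ne h]
    · rw [hv' j1, Finset.sum_congr rfl (fun k hk => by
        rw [hv' k, Pi.single_eq_of_ne (Finset.ne_of_mem_erase hk)]),
        Finset.sum_const_zero]
      simp
  | cons j2 L' ih =>
    intro j1 hchain jr hjr v hv
    have h12 : j1 ≠ j2 := hchain.rel_head
    have hchain' : (j2 :: L').Chain' (· ≠ ·) := hchain.tail
    have hjr' : (j2 :: L').getLast? = some jr := by
      rwa [List.getLast?_cons_cons] at hjr
    set v' : Fin l → ℝ := ((j2 :: L').map (reflM l b)).prod.mulVec (Pi.single jr (-1 : ℝ)) with hv'def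
    obtain ⟨hpos', hineq'⟩ := ih j2 hchain' jr hjr' v' rfl
    have hveq : ∀ k, v k = if k = j1 then -(v' j1) + ∑ c ∈ Finset.univ.erase j1, b j1 c * v' c else v' k := by
      intro k
      rw [hv, show ((j1 :: j2 :: L').map (reflM l b)).prod
            = reflM l b j1 * ((j2 :: L').map (reflM l b)).prod from by
          simp [List.prod_cons],
        ← Matrix.mulVec_mulVec, reflM_mulVec]
    -- growth estimates
    have hsum2 : ∀ s : Finset (Fin l), (∀ k, 0 ≤ v' k) → True := fun _ _ => trivial
    have hbd : ∑ c ∈ Finset.univ.erase j1, v' c ≥ v' j2 :=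
      Finset.single_le_sum (fun c _ => hpos' c)
        (Finset.mem_erase.mpr ⟨Ne.symm h12, Finset.mem_univ _⟩)
    have hbd2 : v' j1 ≤ ∑ c ∈ Finset.univ.erase j2, v' c :=
      Finset.single_le_sum (fun c _ => hpos' c)
        (Finset.mem_erase.mpr ⟨h12, Finset.mem_univ _⟩)
    have hgrow : 2 * ∑ c ∈ Finset.univ.erase j1, v' c ≤ ∑ c ∈ Finset.univ.erase j1, b j1 c * v' c := by
      rw [Finset.mul_sum]
      apply Finset.sum_le_sum
      intro c hc
      exact mul_le_mul_of_nonneg_right (hge j1 c (Ne.symm (Finset.ne_of_mem_erase hc))) (hpos' c)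
    have hmain : 1 + ∑ c ∈ Finset.univ.erase j1, v' c ≤ v j1 := by
      rw [hveq j1, if_pos rfl]
      have h1 : 1 + v' j1 ≤ ∑ c ∈ Finset.univ.erase j1, v' c := by
        calc 1 + v' j1 ≤ 1 + ∑ c ∈ Finset.univ.erase j2, v' c := by linarith
        _ ≤ v' j2 := hineq'
        _ ≤ ∑ c ∈ Finset.univ.erase j1, v' c := hbd
      linarith
    constructor
    · intro k
      rw [hveq k]
      by_cases h : k = j1
      · rw [if_pos h]
        have := hmain
        rw [hveq j1, if_pos rfl] at this
        have hnn : 0 ≤ ∑ c ∈ Finset.univ.erase j1, v' c :=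
          Finset.sum_nonneg (fun c _ => hpos' c)
        linarith
      · rw [if_neg h]; exact hpos' k
    · have : ∑ k ∈ Finset.univ.erase j1, v k = ∑ k ∈ Finset.univ.erase j1, v' k := by
        apply Finset.sum_congr rfl
        intro k hk
        rw [hveq k, if_neg (Finset.ne_of_mem_erase hk)]
      rw [this]
      exact hmain

lemma reflM_sq (l : ℕ) (b : Fin l → Fin l → ℝ) (j : Fin l) :
    reflM l b j * reflM l b j = 1 := by
  ext i k
  rw [Matrix.mul_apply, Matrix.one_apply]
  by_cases hi : i = j
  · subst hi
    rw [← Finset.add_sum_erase _ _ (Finset.mem_univ i),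
      Finset.sum_congr rfl (fun c hc => show reflM l b i i c * reflM l b i c k
          = if c = k then b i c else 0 from by
        have hci : c ≠ i := Finset.ne_of_mem_erase hc
        simp [reflM, hci, Ne.symm hci, mul_ite]),
      Finset.sum_ite_eq' _ k (b i)]
    by_cases hk : k = i
    · subst hk
      simp [reflM]
    · simp [reflM, hk, Ne.symm hk, Finset.mem_erase]
  · have : ∀ c, reflM l b j i c = if i = c then 1 else 0 := fun c => by simp [reflM, hi]
    rw [Finset.sum_congr rfl (fun c _ => show reflM l b j i c * reflM l b j c k
          = if i = c then reflM l b j c k else 0 from by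
        rw [this c]; split_ifs <;> ring),
      Finset.sum_ite_eq _ i (fun c => reflM l b j c k), if_pos (Finset.mem_univ i)]
    by_cases hk : i = k
    · subst hk; simp [reflM, hi]
    · simp [reflM, hi, hk]

/-- **The group generated by the reflections `M j`, `j ∈ J`, is a free product of
copies of `ℤ/2ℤ`**: each `M j` squares to the identity, and no alternating word
`M j₁ ⋯ M jᵣ` with `r ≥ 1`, all `jₜ ∈ J` and `jₜ ≠ jₜ₊₁`, equals the identity matrix. -/
theorem reflM_free_product (l : ℕ) (hl : 2 ≤ l) (b : Fin l → Fin l → ℝ)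
    (hsym : ∀ i j, i ≠ j → b i j = b j i) (hge : ∀ i j, i ≠ j → 2 ≤ b i j)
    (J : Set (Fin l)) (hJ : J.Nonempty) :
    (∀ j ∈ J, reflM l b j * reflM l b j = 1) ∧
    (∀ L : List (Fin l), L ≠ [] → (∀ j ∈ L, j ∈ J) → L.Chain' (· ≠ ·) →
      (L.map (reflM l b)).prod ≠ 1) := by
  refine ⟨fun j _ => reflM_sq l b j, ?_⟩
  intro L hL _ hchain hprod
  obtain ⟨j1, L', rfl⟩ := List.exists_cons_of_ne_nil hL
  obtain ⟨jr, hjr⟩ : ∃ jr, (j1 :: L').getLast? = some jr := by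
    cases h : (j1 :: L').getLast? with
    | none => simp [List.getLast?_eq_none_iff] at h
    | some a => exact ⟨a, rfl⟩
  obtain ⟨hpos, _⟩ := key l b hge L' j1 hchain jr hjr _ rfl
  rw [hprod, Matrix.one_mulVec] at hpos
  have := hpos jr
  simp at this
  linarith
end

section
/- Assume B is invertible and that W_J is Lorentzian. Let i ≠ j be elements of J with b_{ij} > 2, let λ > 1 be the unique eigenvalue of σ_j σ_i exceeding 1, and let v_λ be a nonzero eigenvector of σ_j σ_i for λ such that v_λ lies in the closure of T_J. Then the convex cone generated by {c_k : k ∈ {1,…,l}, k ≠ i, k ≠ j} ∪ {v_λ} is contained in the topological boundary of the closure of T_J. -/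
/-!
Write `b = b i j`, `u_{ij} = (λ + 1) e_i + b λ e_j`. The eigenvector equation forces
`v_λ = τ u_{ij}` and `b² λ = (λ + 1)²`, which makes `u_{ij}` isotropic. Since all `b_{km} ≥ 2`,
an invariant of reduced words keeps the `W`-orbit of `u_{ij}` in the nonnegative orthant; as the
`σ_m` are `B`-self-adjoint and `D` pairs nonnegatively with that orthant, `⟨·, u_{ij}⟩ ≥ 0` on
`T_J`, hence on its closure. For `p = c₀ v_λ + q`, `q = ∑ a_k c_k`, this gives
`⟨p, u_{ij}⟩ = 0 < ⟨c_i, u_{ij}⟩`, so no `p - ε c_i` lies in the closure and `p` is not interior.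
Evaluating `⟨·, u_{ji}⟩ ≥ 0` at `v_λ ∈ T̄_J` gives `τ ≤ 0`, as `⟨u_{ij}, u_{ji}⟩ < 0`; so
`p = q - s u_{ij}` with `s ≥ 0`, the limit of the points `(σ_j σ_i)ⁿ (q + t λ⁻ⁿ c_i)` of `T_J`: indeed
`λ⁻ⁿ (σ_j σ_i)ⁿ c_i` tends to a negative multiple of `u_{ij}`.
-/

open Matrix Finset

/-- The bilinear form `⟨v, w⟩_B = vᵀ B w`. -/
noncomputable def bform (l : ℕ) (b : Fin l → Fin l → ℝ) (v w : Fin l → ℝ) : ℝ :=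
  dotProduct v ((gramB l b).mulVec w)

/-- The subgroup `W_J` generated by the reflections `σ j`, `j ∈ J` (since each `σ j` is an
involution, it coincides with the submonoid generated by them). -/
noncomputable def WJ (l : ℕ) (b : Fin l → Fin l → ℝ) (J : Set (Fin l)) :
    Submonoid (Matrix (Fin l) (Fin l) ℝ) :=
  Submonoid.closure (reflM l b '' J)

/-- The fundamental chamber `D = {x : ⟨x, e i⟩_B ≥ 0 for all i}`. -/
noncomputable def chamberD (l : ℕ) (b : Fin l → Fin l → ℝ) : Set (Fin l → ℝ) :=
  {x | ∀ i : Fin l, 0 ≤ bform l b x (Pi.single i 1)}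

/-- The cone `T_J = ⋃_{w ∈ W_J} w(D)`. -/
noncomputable def TJ (l : ℕ) (b : Fin l → Fin l → ℝ) (J : Set (Fin l)) : Set (Fin l → ℝ) :=
  {y | ∃ w ∈ WJ l b J, ∃ x ∈ chamberD l b, y = w.mulVec x}


/-- The dual basis vector `c k = B⁻¹ e k`, so that `⟨c k, e i⟩_B = δ_{k i}`. -/
noncomputable def cvec (l : ℕ) (b : Fin l → Fin l → ℝ) (k : Fin l) : Fin l → ℝ :=
  (gramB l b)⁻¹.mulVec (Pi.single k 1)

open Filter Topology

section Form

variable {l : ℕ} {b : Fin l → Fin l → ℝ}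

@[simp] lemma bform_add_left (x y v : Fin l → ℝ) :
    bform l b (x + y) v = bform l b x v + bform l b y v := add_dotProduct _ _ _

@[simp] lemma bform_sub_left (x y v : Fin l → ℝ) :
    bform l b (x - y) v = bform l b x v - bform l b y v := sub_dotProduct _ _ _

@[simp] lemma bform_smul_left (c : ℝ) (x v : Fin l → ℝ) :
    bform l b (c • x) v = c * bform l b x v := smul_dotProduct _ _ _

@[simp] lemma bform_sum_left {ι : Type*} (s : Finset ι) (f : ι → Fin l → ℝ) (v : Fin l → ℝ) :
    bform l b (∑ k ∈ s, f k) v = ∑ k ∈ s, bform l b (f k) v := sum_dotProduct _ _ _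

@[simp] lemma bform_add_right (x v w : Fin l → ℝ) :
    bform l b x (v + w) = bform l b x v + bform l b x w := by
  simp [bform, mulVec_add, dotProduct_add]

@[simp] lemma bform_sub_right (x v w : Fin l → ℝ) :
    bform l b x (v - w) = bform l b x v - bform l b x w := by
  simp [bform, mulVec_sub, dotProduct_sub]

@[simp] lemma bform_smul_right (c : ℝ) (x v : Fin l → ℝ) :
    bform l b x (c • v) = c * bform l b x v := by
  simp [bform, mulVec_smul, dotProduct_smul]

@[simp] lemma bform_single_single (r m : Fin l) :
    bform l b (Pi.single r 1) (Pi.single m 1) = gramB l b r m := by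
  simp [bform, mulVec_single]

lemma gramB_self (m : Fin l) : gramB l b m m = 1 := if_pos rfl

lemma gramB_of_ne {r m : Fin l} (h : r ≠ m) : gramB l b r m = -(b r m) / 2 := if_neg h

lemma continuous_bform_left (v : Fin l → ℝ) : Continuous fun x => bform l b x v := by
  unfold bform; fun_prop

lemma bform_nonneg_of_mem_chamberD {x v : Fin l → ℝ} (hx : x ∈ chamberD l b) (hv : 0 ≤ v) :
    0 ≤ bform l b x v := by
  rw [bform, dotProduct_mulVec]
  refine Finset.sum_nonneg fun r _ => mul_nonneg ?_ (hv r)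
  have := hx r
  rwa [bform, dotProduct_mulVec, dotProduct_single, mul_one] at this

variable (hsym : ∀ i j, i ≠ j → b i j = b j i)
include hsym

lemma gramB_transpose : (gramB l b)ᵀ = gramB l b := by
  ext r m
  rcases eq_or_ne r m with rfl | h
  · rfl
  · simp [gramB_of_ne h, gramB_of_ne h.symm, hsym r m h]

lemma bform_comm (v w : Fin l → ℝ) : bform l b v w = bform l b w v := by
  rw [bform, bform, dotProduct_mulVec, ← mulVec_transpose, gramB_transpose hsym, dotProduct_comm]

lemma bform_cvec (hB : IsUnit (gramB l b).det) (k : Fin l) (v : Fin l → ℝ) :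
    bform l b (cvec l b k) v = v k := by
  rw [bform_comm hsym, bform, cvec, mulVec_mulVec, mul_nonsing_inv _ hB, one_mulVec,
    dotProduct_single, mul_one]

lemma bform_sum_smul_cvec (hB : IsUnit (gramB l b).det) (s : Finset (Fin l)) (a v : Fin l → ℝ) :
    bform l b (∑ k ∈ s, a k • cvec l b k) v = ∑ k ∈ s, a k * v k := by
  simp only [bform_sum_left, bform_smul_left, bform_cvec hsym hB]

lemma sum_smul_cvec_mem_chamberD (hB : IsUnit (gramB l b).det) (s : Finset (Fin l))
    {a : Fin l → ℝ} (ha : ∀ k, 0 ≤ a k) : ∑ k ∈ s, a k • cvec l b k ∈ chamberD l b := fun m => by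
  rw [bform_sum_smul_cvec hsym hB]
  exact Finset.sum_nonneg fun k _ =>
    mul_nonneg (ha k) ((Pi.single_nonneg.2 zero_le_one : (0 : Fin l → ℝ) ≤ _) k)

lemma bform_sum_smul_cvec_eq_zero (hB : IsUnit (gramB l b).det) {s : Finset (Fin l)}
    (a : Fin l → ℝ) {v : Fin l → ℝ} (hv : ∀ k ∈ s, v k = 0) :
    bform l b (∑ k ∈ s, a k • cvec l b k) v = 0 := by
  rw [bform_sum_smul_cvec hsym hB]
  exact Finset.sum_eq_zero fun k hk => by rw [hv k hk, mul_zero]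

end Form

section Reflection

variable {l : ℕ} {b : Fin l → Fin l → ℝ} (hsym : ∀ i j, i ≠ j → b i j = b j i)
include hsym

lemma reflM_eq_one_sub (m : Fin l) :
    reflM l b m = 1 - (2 : ℝ) • vecMulVec (Pi.single m 1) (gramB l b *ᵥ Pi.single m 1) := by
  ext r c
  rcases eq_or_ne r m with rfl | hr
  · rcases eq_or_ne c r with rfl | hc
    · norm_num [reflM, vecMulVec_apply, mulVec_single, gramB_self]
    · simp [reflM, vecMulVec_apply, mulVec_single, hc, gramB_of_ne hc, hsym c r hc,
        one_apply_ne hc.symm]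
      ring
  · simp [reflM, vecMulVec_apply, hr, one_apply]

lemma reflM_mulVec_s9 (m : Fin l) (y : Fin l → ℝ) :
    reflM l b m *ᵥ y = y - (2 * bform l b y (Pi.single m 1)) • Pi.single m 1 := by
  rw [reflM_eq_one_sub hsym, sub_mulVec, one_mulVec, smul_mulVec, vecMulVec_mulVec, bform,
    dotProduct_comm, op_smul_eq_smul, smul_smul]

lemma reflM_mulVec_of_bform_eq_zero {m : Fin l} {y : Fin l → ℝ}
    (hy : bform l b y (Pi.single m 1) = 0) : reflM l b m *ᵥ y = y := by
  simp [reflM_mulVec_s9 hsym, hy]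

lemma bform_reflM_mulVec_single_self (m : Fin l) (y : Fin l → ℝ) :
    bform l b (reflM l b m *ᵥ y) (Pi.single m 1) = -bform l b y (Pi.single m 1) := by
  rw [reflM_mulVec_s9 hsym]
  simp only [bform_sub_left, bform_smul_left, bform_single_single, gramB_self]
  ring

lemma bform_reflM_mulVec_single_of_ne {m k : Fin l} (hmk : m ≠ k) (y : Fin l → ℝ) :
    bform l b (reflM l b m *ᵥ y) (Pi.single k 1) =
      bform l b y (Pi.single k 1) + b m k * bform l b y (Pi.single m 1) := by
  rw [reflM_mulVec_s9 hsym]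
  simp only [bform_sub_left, bform_smul_left, bform_single_single, gramB_of_ne hmk]
  ring

lemma bform_reflM_mulVec_left (m : Fin l) (x y : Fin l → ℝ) :
    bform l b (reflM l b m *ᵥ x) y = bform l b x (reflM l b m *ᵥ y) := by
  simp only [reflM_mulVec_s9 hsym, bform_sub_left, bform_smul_left, bform_sub_right, bform_smul_right,
    bform_comm hsym (Pi.single m 1) y]
  ring

lemma reflM_mul_self (m : Fin l) : reflM l b m * reflM l b m = 1 := by
  refine mulVec_injective (funext fun y => ?_)
  rw [← mulVec_mulVec, one_mulVec, reflM_mulVec_s9 hsym m y, reflM_mulVec_s9 hsym m (y - _)]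
  simp only [bform_sub_left, bform_smul_left, bform_single_single, gramB_self]
  module

lemma reflM_mulVec_smul_single_add {i j : Fin l} (hij : i ≠ j) (x y : ℝ) :
    reflM l b i *ᵥ (x • Pi.single i 1 + y • Pi.single j 1) =
      (b i j * y - x) • Pi.single i 1 + y • Pi.single j 1 := by
  rw [reflM_mulVec_s9 hsym]
  simp only [bform_add_left, bform_smul_left, bform_single_single, gramB_self,
    gramB_of_ne hij.symm, hsym j i hij.symm]
  module

end Reflection

theorem List.exists_isChain_ne_prod_map_eq {α M : Type*} [Monoid M] (f : α → M)
    (hf : ∀ a, f a * f a = 1) (L : List α) :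
    ∃ L' : List α, L'.IsChain (· ≠ ·) ∧ (L'.map f).prod = (L.map f).prod := by
  induction L with
  | nil => exact ⟨[], .nil, rfl⟩
  | cons a L ih =>
    obtain ⟨L', hL', hprod⟩ := ih
    rw [List.map_cons, List.prod_cons, ← hprod]
    cases L' with
    | nil => exact ⟨[a], .singleton a, by simp⟩
    | cons c L' =>
      by_cases hac : a = c
      · subst hac
        exact ⟨L', hL'.tail, by simp [← mul_assoc, hf]⟩
      · exact ⟨a :: c :: L', List.isChain_cons_cons.2 ⟨hac, hL'⟩, rfl⟩

section Words

variable {l : ℕ} {b : Fin l → Fin l → ℝ}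

lemma exists_list_of_mem_WJ {J : Set (Fin l)} {w : Matrix (Fin l) (Fin l) ℝ}
    (hw : w ∈ WJ l b J) : ∃ L : List (Fin l), (L.map (reflM l b)).prod = w := by
  induction hw using Submonoid.closure_induction with
  | mem x hx =>
    obtain ⟨k, -, rfl⟩ := hx
    exact ⟨[k], by simp⟩
  | one => exact ⟨[], rfl⟩
  | mul x y _ _ hx hy =>
    obtain ⟨L₁, rfl⟩ := hx
    obtain ⟨L₂, rfl⟩ := hy
    exact ⟨L₁ ++ L₂, by simp⟩

lemma bform_prod_mulVec_left (hsym : ∀ i j, i ≠ j → b i j = b j i) (L : List (Fin l))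
    (x y : Fin l → ℝ) :
    bform l b ((L.map (reflM l b)).prod *ᵥ x) y =
      bform l b x ((L.reverse.map (reflM l b)).prod *ᵥ y) := by
  induction L generalizing y with
  | nil => simp
  | cons a L ih =>
    rw [List.map_cons, List.prod_cons, ← mulVec_mulVec, bform_reflM_mulVec_left hsym, ih,
      List.reverse_cons, List.map_append, List.prod_append, ← mulVec_mulVec]
    simp

end Words

/-- The invariant of the orbit argument: `y` is nonnegative and, with `h` the last reflection
applied to it, `⟨y, e_k⟩ ≤ 0` and `⟨y, e_h⟩ + ⟨y, e_k⟩ ≤ 0` for every `k ≠ h`. -/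
def PositiveAt (l : ℕ) (b : Fin l → Fin l → ℝ) (y : Fin l → ℝ) (h : Fin l) : Prop :=
  (∀ r, 0 ≤ y r) ∧ ∀ k, k ≠ h → bform l b y (Pi.single k 1) ≤ 0 ∧
    bform l b y (Pi.single h 1) + bform l b y (Pi.single k 1) ≤ 0

section PositiveAt

variable {l : ℕ} {b : Fin l → Fin l → ℝ} {y : Fin l → ℝ} {h : Fin l}

lemma PositiveAt.smul {c : ℝ} (hc : 0 ≤ c) (hy : PositiveAt l b y h) :
    PositiveAt l b (c • y) h := by
  refine ⟨fun r => mul_nonneg hc (hy.1 r), fun k hk => ?_⟩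
  obtain ⟨h₁, h₂⟩ := hy.2 k hk
  simp only [bform_smul_left, ← mul_add]
  exact ⟨mul_nonpos_of_nonneg_of_nonpos hc h₁, mul_nonpos_of_nonneg_of_nonpos hc h₂⟩

/-- This is where `b m k ≥ 2` enters: with `t = ⟨y, e_m⟩ ≤ 0`, reflecting in `e_m` adds
`b m k * t ≤ 2 t` to `⟨y, e_k⟩`. -/
lemma PositiveAt.reflect (hsym : ∀ i j, i ≠ j → b i j = b j i)
    (hge : ∀ i j, i ≠ j → 2 ≤ b i j) {m : Fin l} (hmh : m ≠ h) (hy : PositiveAt l b y h) :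
    PositiveAt l b (reflM l b m *ᵥ y) m := by
  obtain ⟨hm, hhm⟩ := hy.2 m hmh
  refine ⟨fun r => ?_, fun k hkm => ?_⟩
  · rw [reflM_mulVec_s9 hsym]
    rcases eq_or_ne r m with rfl | hr
    · simp only [Pi.sub_apply, Pi.smul_apply, Pi.single_eq_same, smul_eq_mul]
      nlinarith [hy.1 r]
    · simpa [Pi.single_eq_of_ne hr] using hy.1 r
  rw [bform_reflM_mulVec_single_self hsym, bform_reflM_mulVec_single_of_ne hsym hkm.symm]
  have hb := hge m k hkm.symm
  rcases eq_or_ne k h with rfl | hkh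
  · constructor <;> nlinarith
  · have hk := (hy.2 k hkh).1
    constructor <;> nlinarith

end PositiveAt

/-- `v_λ` up to scale, once `b i j ^ 2 * λ = (λ + 1) ^ 2` (see `mulVec_uvec`). -/
noncomputable def uvec (l : ℕ) (b : Fin l → Fin l → ℝ) (i j : Fin l) (lam : ℝ) : Fin l → ℝ :=
  (lam + 1) • Pi.single i 1 + (b i j * lam) • Pi.single j 1

section Uvec

variable {l : ℕ} {b : Fin l → Fin l → ℝ} {i j : Fin l} {lam : ℝ}

lemma uvec_apply_of_ne {k : Fin l} (hki : k ≠ i) (hkj : k ≠ j) : uvec l b i j lam k = 0 := by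
  simp [uvec, Pi.single_eq_of_ne hki, Pi.single_eq_of_ne hkj]

lemma uvec_nonneg (hb : 0 ≤ b i j) (hlam : 0 ≤ lam) (r : Fin l) : 0 ≤ uvec l b i j lam r := by
  simp only [uvec, Pi.add_apply, Pi.smul_apply, Pi.single_apply, smul_eq_mul]
  split_ifs <;> positivity

lemma bform_uvec_single (k : Fin l) :
    bform l b (uvec l b i j lam) (Pi.single k 1) =
      (lam + 1) * gramB l b i k + b i j * lam * gramB l b j k := by
  simp [uvec]

lemma bform_uvec_single_right (hij : i ≠ j) :
    bform l b (uvec l b i j lam) (Pi.single j 1) = b i j * (lam - 1) / 2 := by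
  rw [bform_uvec_single, gramB_self, gramB_of_ne hij]
  ring

variable (hsym : ∀ i j, i ≠ j → b i j = b j i) (hij : i ≠ j)
  (hK : b i j ^ 2 * lam = (lam + 1) ^ 2)
include hsym hij hK

lemma bform_uvec_single_left :
    bform l b (uvec l b i j lam) (Pi.single i 1) = -((lam + 1) * (lam - 1)) / 2 := by
  rw [bform_uvec_single, gramB_self, gramB_of_ne hij.symm, hsym j i hij.symm]
  linear_combination (-1 / 2 : ℝ) * hK

lemma bform_uvec_self : bform l b (uvec l b i j lam) (uvec l b i j lam) = 0 := by
  conv_lhs => arg 4; rw [uvec]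
  simp only [bform_add_right, bform_smul_right, bform_uvec_single_left hsym hij hK,
    bform_uvec_single_right hij]
  linear_combination (lam - 1) / 2 * hK

lemma bform_uvec_swap_neg (hlam : 1 < lam) (hb : 0 < b i j) :
    bform l b (uvec l b i j lam) (uvec l b j i lam) < 0 := by
  have : bform l b (uvec l b i j lam) (uvec l b j i lam) =
      -(b i j * (lam + 1) * (lam - 1) ^ 2) / 2 := by
    rw [uvec.eq_1 l b j i lam, hsym j i hij.symm]
    simp only [bform_add_right, bform_smul_right, bform_uvec_single_left hsym hij hK,
      bform_uvec_single_right hij]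
    ring
  rw [this]
  have : 0 < lam - 1 := by linarith
  have : 0 < b i j * (lam + 1) * (lam - 1) ^ 2 := by positivity
  linarith

lemma exists_pos_reflM_mulVec_uvec {m : Fin l} (hm : m = i ∨ m = j) (hlam : 0 < lam)
    (hb : 0 < b i j) :
    ∃ r : ℝ, 0 < r ∧ reflM l b m *ᵥ uvec l b i j lam = r • uvec l b j i lam := by
  have hlam1 : lam + 1 ≠ 0 := by linarith
  rcases hm with rfl | rfl
  · refine ⟨lam * b m j / (lam + 1), by positivity, ?_⟩
    rw [uvec, reflM_mulVec_smul_single_add hsym hij, uvec, hsym j m hij.symm]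
    match_scalars
    · field_simp
      linear_combination hK
    · field_simp
  · refine ⟨b i m / (lam + 1), by positivity, ?_⟩
    rw [uvec, add_comm, reflM_mulVec_smul_single_add hsym hij.symm, uvec, hsym m i hij.symm]
    match_scalars <;> field_simp <;> linarith

lemma mulVec_uvec : (reflM l b j * reflM l b i) *ᵥ uvec l b i j lam = lam • uvec l b i j lam := by
  rw [← mulVec_mulVec, uvec, reflM_mulVec_smul_single_add hsym hij, add_comm,
    reflM_mulVec_smul_single_add hsym hij.symm, hsym j i hij.symm]
  match_scalars
  · linear_combination b i j * hK
  · linear_combination hK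

lemma mulVec_uvec_swap (hlam : lam ≠ 0) :
    (reflM l b j * reflM l b i) *ᵥ uvec l b j i lam = lam⁻¹ • uvec l b j i lam := by
  have h := mulVec_uvec hsym hij.symm (hsym i j hij ▸ hK)
  calc (reflM l b j * reflM l b i) *ᵥ uvec l b j i lam
      = lam⁻¹ • (reflM l b j * reflM l b i) *ᵥ (lam • uvec l b j i lam) := by
        rw [mulVec_smul, smul_smul, inv_mul_cancel₀ hlam, one_smul]
    _ = lam⁻¹ • uvec l b j i lam := by
        rw [← h, mulVec_mulVec, mul_assoc, ← mul_assoc (reflM l b i), reflM_mul_self hsym,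
          one_mul, reflM_mul_self hsym, one_mulVec]

end Uvec

section Orbit

variable {l : ℕ} {b : Fin l → Fin l → ℝ} {i j : Fin l} {lam : ℝ}
  (hsym : ∀ i j, i ≠ j → b i j = b j i) (hge : ∀ i j, i ≠ j → 2 ≤ b i j) (hij : i ≠ j)
  (hK : b i j ^ 2 * lam = (lam + 1) ^ 2) (hlam : 1 < lam)
include hsym hge hij hK hlam

lemma positiveAt_uvec : PositiveAt l b (uvec l b i j lam) j := by
  have hb := hge i j hij
  have hble : b i j ≤ lam + 1 := by nlinarith
  refine ⟨uvec_nonneg (by linarith) (by linarith), fun k hkj => ?_⟩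
  rw [bform_uvec_single_right hij]
  rcases eq_or_ne k i with rfl | hki
  · rw [bform_uvec_single_left hsym hij hK]
    constructor <;> nlinarith
  · rw [bform_uvec_single, gramB_of_ne hki.symm, gramB_of_ne hkj.symm]
    have hik := hge i k hki.symm
    have hjk := hge j k hkj.symm
    have : 0 ≤ b i j * lam * (b j k - 2) := by
      apply mul_nonneg <;> nlinarith
    constructor <;> nlinarith

lemma reflM_mulVec_uvec_cases (m : Fin l) :
    (∃ r : ℝ, 0 < r ∧ reflM l b m *ᵥ uvec l b i j lam = r • uvec l b j i lam) ∨
      PositiveAt l b (reflM l b m *ᵥ uvec l b i j lam) m := by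
  by_cases hm : m = i ∨ m = j
  · exact .inl (exists_pos_reflM_mulVec_uvec hsym hij hK hm (by linarith)
      (by linarith [hge i j hij]))
  · push Not at hm
    exact .inr ((positiveAt_uvec hsym hge hij hK hlam).reflect hsym hge hm.2)

/-- `σ_i` and `σ_j` exchange the rays of `u_{ij}` and `u_{ji}`; any other reflection takes them
into `PositiveAt`, which the next letter of a reduced word preserves. -/
lemma uvec_orbit_trichotomy (L : List (Fin l)) (hL : L.IsChain (· ≠ ·)) :
    (∃ r : ℝ, 0 < r ∧ ((L.map (reflM l b)).prod *ᵥ uvec l b i j lam = r • uvec l b i j lam ∨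
        (L.map (reflM l b)).prod *ᵥ uvec l b i j lam = r • uvec l b j i lam)) ∨
      ∃ h ∈ L.head?, PositiveAt l b ((L.map (reflM l b)).prod *ᵥ uvec l b i j lam) h := by
  have hK' : b j i ^ 2 * lam = (lam + 1) ^ 2 := hsym i j hij ▸ hK
  induction L with
  | nil => exact .inl ⟨1, one_pos, .inl (by simp)⟩
  | cons m L ih =>
    rw [List.map_cons, List.prod_cons, ← mulVec_mulVec]
    rcases ih hL.tail with ⟨r, hr, hy | hy⟩ | ⟨h, hh, hy⟩
    · rw [hy, mulVec_smul]
      rcases reflM_mulVec_uvec_cases hsym hge hij hK hlam m with ⟨s, hs, hu⟩ | hu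
      · exact .inl ⟨r * s, by positivity, .inr (by rw [hu, smul_smul])⟩
      · exact .inr ⟨m, rfl, hu.smul hr.le⟩
    · rw [hy, mulVec_smul]
      rcases reflM_mulVec_uvec_cases hsym hge hij.symm hK' hlam m with ⟨s, hs, hu⟩ | hu
      · exact .inl ⟨r * s, by positivity, .inl (by rw [hu, smul_smul])⟩
      · exact .inr ⟨m, rfl, hu.smul hr.le⟩
    · obtain ⟨L', rfl⟩ : ∃ L', L = h :: L' := by
        cases L <;> simp_all
      exact .inr ⟨m, rfl, hy.reflect hsym hge (List.isChain_cons_cons.1 hL).1⟩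

lemma prod_mulVec_uvec_nonneg (L : List (Fin l)) (r : Fin l) :
    0 ≤ ((L.map (reflM l b)).prod *ᵥ uvec l b i j lam) r := by
  obtain ⟨L', hL', hprod⟩ := L.exists_isChain_ne_prod_map_eq _ (reflM_mul_self hsym)
  have hb := hge i j hij
  rw [← hprod]
  rcases uvec_orbit_trichotomy hsym hge hij hK hlam L' hL' with ⟨s, hs, hy | hy⟩ | ⟨h, -, hy⟩
  · rw [hy]
    exact mul_nonneg hs.le (uvec_nonneg (by linarith) (by linarith) r)
  · rw [hy]
    exact mul_nonneg hs.le (uvec_nonneg (by linarith [hsym i j hij]) (by linarith) r)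
  · exact hy.1 r

lemma bform_uvec_nonneg_of_mem_TJ {J : Set (Fin l)} {y : Fin l → ℝ} (hy : y ∈ TJ l b J) :
    0 ≤ bform l b y (uvec l b i j lam) := by
  obtain ⟨w, hw, x, hx, rfl⟩ := hy
  obtain ⟨L, rfl⟩ := exists_list_of_mem_WJ hw
  rw [bform_prod_mulVec_left hsym]
  exact bform_nonneg_of_mem_chamberD hx (prod_mulVec_uvec_nonneg hsym hge hij hK hlam _)

lemma bform_uvec_nonneg_of_mem_closure_TJ {J : Set (Fin l)} {y : Fin l → ℝ}
    (hy : y ∈ closure (TJ l b J)) : 0 ≤ bform l b y (uvec l b i j lam) :=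
  closure_minimal (fun _ => bform_uvec_nonneg_of_mem_TJ hsym hge hij hK hlam)
    (isClosed_le continuous_const (continuous_bform_left _)) hy

end Orbit

section Eigenvector

variable {l : ℕ} {b : Fin l → Fin l → ℝ} {i j : Fin l} {lam : ℝ} {v : Fin l → ℝ}

lemma reflM_mulVec_apply_of_ne {m r : Fin l} (hrm : r ≠ m) (y : Fin l → ℝ) :
    (reflM l b m *ᵥ y) r = y r := by
  simp [mulVec, dotProduct, reflM, hrm]

lemma eq_smul_single_add_of_mulVec_eq_smul (hij : i ≠ j) (hlam : lam ≠ 1)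
    (heig : (reflM l b j * reflM l b i) *ᵥ v = lam • v) :
    v = v i • Pi.single i 1 + v j • Pi.single j 1 := by
  funext r
  rcases eq_or_ne r i with rfl | hri
  · simp [hij]
  rcases eq_or_ne r j with rfl | hrj
  · simp [hri]
  have hr := congrFun heig r
  rw [← mulVec_mulVec, reflM_mulVec_apply_of_ne hrj, reflM_mulVec_apply_of_ne hri] at hr
  have : (lam - 1) * v r = 0 := by simp only [Pi.smul_apply, smul_eq_mul] at hr; linarith
  simp [hri, hrj, (mul_eq_zero.1 this).resolve_left (sub_ne_zero.2 hlam)]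

lemma exists_eq_smul_uvec (hsym : ∀ i j, i ≠ j → b i j = b j i) (hij : i ≠ j) (hlam : 1 < lam)
    (hv0 : v ≠ 0) (heig : (reflM l b j * reflM l b i) *ᵥ v = lam • v) :
    b i j ^ 2 * lam = (lam + 1) ^ 2 ∧ ∃ τ : ℝ, v = τ • uvec l b i j lam := by
  have hv := eq_smul_single_add_of_mulVec_eq_smul hij hlam.ne' heig
  set x := v i
  set y := v j
  rw [hv, ← mulVec_mulVec, reflM_mulVec_smul_single_add hsym hij, add_comm,
    reflM_mulVec_smul_single_add hsym hij.symm, hsym j i hij.symm] at heig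
  have hi := congrFun heig i
  have hj := congrFun heig j
  simp only [Pi.add_apply, Pi.smul_apply, Pi.single_eq_of_ne, Pi.single_eq_same, hij, hij.symm,
    ne_eq, not_false_eq_true, smul_eq_mul, mul_zero, mul_one, zero_add, add_zero] at hi hj
  have hy : (lam + 1) * y = b i j * lam * x := by linear_combination -hj + b i j * hi
  have hx : x ≠ 0 := by
    rintro hx
    have : y = 0 := by simpa [hx, show lam + 1 ≠ 0 by linarith] using hy
    exact hv0 (by rw [hv, hx, this]; simp)
  refine ⟨mul_right_cancel₀ hx ?_, x / (lam + 1), ?_⟩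
  · linear_combination (lam + 1) * hi - b i j * hy
  · rw [hv, uvec]
    have : lam + 1 ≠ 0 := by linarith
    match_scalars
    · field_simp
    · field_simp
      linear_combination hy

end Eigenvector

lemma pow_mulVec_of_mulVec_eq_smul {ι R : Type*} [Fintype ι] [DecidableEq ι] [CommSemiring R]
    {A : Matrix ι ι R} {μ : R} {v : ι → R} (h : A *ᵥ v = μ • v) (n : ℕ) :
    A ^ n *ᵥ v = μ ^ n • v := by
  induction n with
  | zero => simp
  | succ n ih => rw [pow_succ', ← mulVec_mulVec, ih, mulVec_smul, h, smul_smul, pow_succ]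

lemma tendsto_inv_pow_smul_pow_mulVec {ι : Type*} [Fintype ι] [DecidableEq ι]
    {A : Matrix ι ι ℝ} {μ : ℝ} (hμ : 1 < μ) {u u' z : ι → ℝ} (hu : A *ᵥ u = μ • u)
    (hu' : A *ᵥ u' = μ⁻¹ • u') (hz : A *ᵥ z = z) :
    Tendsto (fun n : ℕ => (μ ^ n)⁻¹ • (A ^ n *ᵥ (u + u' + z))) atTop (𝓝 u) := by
  have h0 : Tendsto (fun n : ℕ => μ⁻¹ ^ n) atTop (𝓝 0) :=
    tendsto_pow_atTop_nhds_zero_of_lt_one (by positivity) (inv_lt_one_of_one_lt₀ hμ)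
  have hz' := pow_mulVec_of_mulVec_eq_smul (A := A) (μ := 1) (v := z) (by rwa [one_smul])
  have hμ0 : μ ≠ 0 := by positivity
  have : ∀ n : ℕ, (μ ^ n)⁻¹ • (A ^ n *ᵥ (u + u' + z)) = u + ((μ⁻¹ ^ n) ^ 2 • u' + μ⁻¹ ^ n • z) := by
    intro n
    rw [mulVec_add, mulVec_add, pow_mulVec_of_mulVec_eq_smul hu, pow_mulVec_of_mulVec_eq_smul hu',
      hz', one_pow, one_smul]
    simp only [inv_pow]
    match_scalars <;> field_simp
  simp_rw [this]
  simpa using tendsto_const_nhds.add (((h0.pow 2).smul_const u').add (h0.smul_const z))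

lemma notMem_interior_of_forall_nonneg {E : Type*} [AddCommGroup E] [Module ℝ E]
    [TopologicalSpace E] [IsTopologicalAddGroup E] [ContinuousSMul ℝ E] {S : Set E}
    (f : E →ₗ[ℝ] ℝ) (hS : ∀ y ∈ S, 0 ≤ f y) {p c : E} (hp : f p = 0) (hc : 0 < f c) :
    p ∉ interior S := by
  intro hpS
  have hcont : Tendsto (fun t : ℝ => p - t • c) (𝓝[>] 0) (𝓝 p) := by
    have : Continuous fun t : ℝ => p - t • c := by fun_prop
    simpa using (this.tendsto 0).mono_left nhdsWithin_le_nhds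
  obtain ⟨t, htS, ht⟩ := ((hcont.eventually (mem_interior_iff_mem_nhds.1 hpS)).and
    self_mem_nhdsWithin).exists
  have := hS _ htS
  rw [map_sub, map_smul, hp, smul_eq_mul] at this
  nlinarith [mul_pos (show (0 : ℝ) < t from ht) hc]

section Closure

variable {l : ℕ} {b : Fin l → Fin l → ℝ} {i j : Fin l} {lam : ℝ}
  (hsym : ∀ i j, i ≠ j → b i j = b j i) (hB : IsUnit (gramB l b).det) (hij : i ≠ j)
  (hK : b i j ^ 2 * lam = (lam + 1) ^ 2) (hlam : 1 < lam)
include hsym hB hij hK hlam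

/-- The coefficient of `u_{ij}` is `⟨c_i, u_{ji}⟩ / ⟨u_{ij}, u_{ji}⟩`, as `u_{ij}` and `u_{ji}`
are isotropic. -/
lemma exists_cvec_eq_smul_uvec_add : ∃ (β : ℝ) (z : Fin l → ℝ),
    bform l b z (Pi.single i 1) = 0 ∧ bform l b z (Pi.single j 1) = 0 ∧
      cvec l b i = -(2 * lam / ((lam + 1) * (lam - 1) ^ 2)) • uvec l b i j lam +
        β • uvec l b j i lam + z := by
  have hK' : b j i ^ 2 * lam = (lam + 1) ^ 2 := hsym i j hij ▸ hK
  have hb : b i j ≠ 0 := by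
    rintro h
    rw [h] at hK
    nlinarith
  have h1 : lam - 1 ≠ 0 := by linarith
  have h2 : lam + 1 ≠ 0 := by linarith
  refine ⟨-(2 / (b i j * (lam - 1) ^ 2)), _, ?_, ?_, (add_sub_cancel _ _).symm⟩ <;>
    simp only [bform_sub_left, bform_add_left, bform_smul_left, bform_cvec hsym hB,
      bform_uvec_single_left hsym hij hK, bform_uvec_single_right hij,
      bform_uvec_single_left hsym hij.symm hK', bform_uvec_single_right hij.symm,
      Pi.single_eq_same, Pi.single_eq_of_ne hij, hsym j i hij.symm] <;>
    field_simp
  · ring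
  · linear_combination hK

lemma add_smul_uvec_mem_closure_TJ {J : Set (Fin l)} (hiJ : i ∈ J) (hjJ : j ∈ J)
    {q : Fin l → ℝ} (hqD : q ∈ chamberD l b) (hqi : bform l b q (Pi.single i 1) = 0)
    (hqj : bform l b q (Pi.single j 1) = 0) {s : ℝ} (hs : s ≤ 0) :
    q + s • uvec l b i j lam ∈ closure (TJ l b J) := by
  obtain ⟨β, z, hzi, hzj, hc⟩ := exists_cvec_eq_smul_uvec_add hsym hB hij hK hlam
  set α := -(2 * lam / ((lam + 1) * (lam - 1) ^ 2))
  have hα : α < 0 := by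
    have : 0 < (lam + 1) * (lam - 1) ^ 2 := by nlinarith
    simp only [α, neg_lt_zero]
    positivity
  set A := reflM l b j * reflM l b i
  have hA : A ∈ WJ l b J :=
    mul_mem (Submonoid.subset_closure ⟨j, hjJ, rfl⟩) (Submonoid.subset_closure ⟨i, hiJ, rfl⟩)
  have hfix {y : Fin l → ℝ} (hyi : bform l b y (Pi.single i 1) = 0)
      (hyj : bform l b y (Pi.single j 1) = 0) (n : ℕ) : A ^ n *ᵥ y = y := by
    have := pow_mulVec_of_mulVec_eq_smul (A := A) (μ := 1) (v := y) (by
      rw [one_smul, ← mulVec_mulVec, reflM_mulVec_of_bform_eq_zero hsym hyi,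
        reflM_mulVec_of_bform_eq_zero hsym hyj]) n
    rwa [one_pow, one_smul] at this
  have hlim : Tendsto (fun n : ℕ => (lam ^ n)⁻¹ • (A ^ n *ᵥ cvec l b i)) atTop
      (𝓝 (α • uvec l b i j lam)) := by
    rw [hc]
    refine tendsto_inv_pow_smul_pow_mulVec hlam ?_ ?_ (by simpa using hfix hzi hzj 1)
    · rw [mulVec_smul, mulVec_uvec hsym hij hK, smul_comm]
    · rw [mulVec_smul, mulVec_uvec_swap hsym hij hK (by linarith), smul_comm]
  have hseq (n : ℕ) : A ^ n *ᵥ (q + (s / α * (lam ^ n)⁻¹) • cvec l b i) =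
      q + (s / α) • ((lam ^ n)⁻¹ • (A ^ n *ᵥ cvec l b i)) := by
    rw [mulVec_add, hfix hqi hqj, mulVec_smul, smul_smul]
  have hmem (n : ℕ) : q + (s / α * (lam ^ n)⁻¹) • cvec l b i ∈ chamberD l b := by
    intro m
    rw [bform_add_left, bform_smul_left, bform_cvec hsym hB]
    have hsα : 0 ≤ s / α := div_nonneg_of_nonpos hs hα.le
    have hm : (0 : Fin l → ℝ) ≤ Pi.single m 1 := Pi.single_nonneg.2 zero_le_one
    exact add_nonneg (hqD m) (mul_nonneg (by positivity) (hm i))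
  refine mem_closure_of_tendsto (b := atTop) (f := fun n => A ^ n *ᵥ (q + _)) ?_
    (Eventually.of_forall fun n => ⟨A ^ n, pow_mem hA n, _, hmem n, rfl⟩)
  simp_rw [hseq]
  convert tendsto_const_nhds.add (hlim.const_smul (s / α)) using 2
  rw [smul_smul, div_mul_cancel₀ _ hα.ne]

end Closure

lemma notMem_interior_closure_TJ_of_bform_uvec_eq_zero {l : ℕ} {b : Fin l → Fin l → ℝ}
    {i j : Fin l} {lam : ℝ} (hsym : ∀ i j, i ≠ j → b i j = b j i)
    (hge : ∀ i j, i ≠ j → 2 ≤ b i j) (hB : IsUnit (gramB l b).det) (hij : i ≠ j)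
    (hK : b i j ^ 2 * lam = (lam + 1) ^ 2) (hlam : 1 < lam) {J : Set (Fin l)} {p : Fin l → ℝ}
    (hp : bform l b p (uvec l b i j lam) = 0) : p ∉ interior (closure (TJ l b J)) := by
  obtain ⟨f, hf⟩ : ∃ f : (Fin l → ℝ) →ₗ[ℝ] ℝ, ∀ y, f y = bform l b y (uvec l b i j lam) :=
    ⟨dotProductEquiv ℝ (Fin l) (gramB l b *ᵥ uvec l b i j lam), fun y => by
      simp [bform, dotProduct_comm]⟩
  refine notMem_interior_of_forall_nonneg f (c := cvec l b i)
    (fun y hy => (hf y).symm ▸ bform_uvec_nonneg_of_mem_closure_TJ hsym hge hij hK hlam hy)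
    ((hf p).trans hp) ?_
  rw [hf, bform_cvec hsym hB]
  simp only [uvec, Pi.add_apply, Pi.smul_apply, Pi.single_eq_same, Pi.single_eq_of_ne hij,
    smul_eq_mul, mul_one, mul_zero, add_zero]
  linarith

theorem cone_subset_frontier_TJ_general (l : ℕ) (b : Fin l → Fin l → ℝ)
    (hsym : ∀ i j, i ≠ j → b i j = b j i) (hge : ∀ i j, i ≠ j → 2 ≤ b i j)
    (hBinv : IsUnit (gramB l b).det)
    (J : Finset (Fin l))
    (i j : Fin l) (hiJ : i ∈ J) (hjJ : j ∈ J) (hij : i ≠ j)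
    (lam : ℝ) (hlam : 1 < lam)
    (vlam : Fin l → ℝ) (hv0 : vlam ≠ 0)
    (heig : (reflM l b j * reflM l b i).mulVec vlam = lam • vlam)
    (hvT : vlam ∈ closure (TJ l b ↑J)) :
    ∀ (a : Fin l → ℝ) (c0 : ℝ), (∀ k, 0 ≤ a k) → 0 ≤ c0 →
      c0 • vlam + ∑ k ∈ (Finset.univ.erase i).erase j, a k • cvec l b k
        ∈ frontier (closure (TJ l b ↑J)) := by
  intro a c0 ha hc0
  obtain ⟨hK, τ, rfl⟩ := exists_eq_smul_uvec hsym hij hlam hv0 heig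
  have hτ : τ ≤ 0 := by
    have hvu := bform_uvec_nonneg_of_mem_closure_TJ hsym hge hij.symm (hsym i j hij ▸ hK) hlam hvT
    rw [bform_smul_left] at hvu
    exact nonpos_of_mul_nonneg_left hvu
      (bform_uvec_swap_neg hsym hij hK hlam (by linarith [hge i j hij]))
  have hq0 {v : Fin l → ℝ} (hv : ∀ k, k ≠ i → k ≠ j → v k = 0) :
      bform l b (∑ k ∈ (Finset.univ.erase i).erase j, a k • cvec l b k) v = 0 :=
    bform_sum_smul_cvec_eq_zero hsym hBinv a fun k hk =>
      hv k (Finset.ne_of_mem_erase (Finset.mem_of_mem_erase hk)) (Finset.ne_of_mem_erase hk)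
  rw [frontier, closure_closure, smul_smul, add_comm]
  refine ⟨add_smul_uvec_mem_closure_TJ hsym hBinv hij hK hlam hiJ hjJ
    (sum_smul_cvec_mem_chamberD hsym hBinv _ ha)
    (hq0 fun k hki _ => Pi.single_eq_of_ne hki 1) (hq0 fun k _ hkj => Pi.single_eq_of_ne hkj 1)
    (mul_nonpos_of_nonneg_of_nonpos hc0 hτ), ?_⟩
  refine notMem_interior_closure_TJ_of_bform_uvec_eq_zero hsym hge hBinv hij hK hlam ?_
  rw [bform_add_left, hq0 fun k => uvec_apply_of_ne, bform_smul_left,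
    bform_uvec_self hsym hij hK, mul_zero, add_zero]

/-- **Limit faces of the closed cone `T̄_J` (Lorentzian case).**
Assume `B` is invertible and `W_J` is Lorentzian, i.e. the submatrix `B_J` is invertible
with exactly one negative eigenvalue (signature `(|J| - 1, 1)`). Let `i ≠ j` in `J` with
`b i j > 2`, let `λ > 1` be the unique eigenvalue of `σ j σ i` exceeding `1`, and let
`v_λ ≠ 0` be an eigenvector for `λ` lying in the closure of `T_J`. Then the convex cone
generated by `{c k : k ≠ i, j} ∪ {v_λ}` is contained in the topological boundary of the
closure of `T_J`. -/
theorem cone_subset_frontier_TJ (l : ℕ) (hl : 2 ≤ l) (b : Fin l → Fin l → ℝ)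
    (hsym : ∀ i j, i ≠ j → b i j = b j i) (hge : ∀ i j, i ≠ j → 2 ≤ b i j)
    (hBinv : IsUnit (gramB l b).det)
    (J : Finset (Fin l))
    (hHerm : ((gramB l b).submatrix
        (Subtype.val : {k : Fin l // k ∈ J} → Fin l) Subtype.val).IsHermitian)
    (hJdet : IsUnit ((gramB l b).submatrix
        (Subtype.val : {k : Fin l // k ∈ J} → Fin l) Subtype.val).det)
    (hJneg : (Finset.univ.filter fun k => hHerm.eigenvalues k < 0).card = 1)
    (hJpos : (Finset.univ.filter fun k => 0 < hHerm.eigenvalues k).card = J.card - 1)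
    (i j : Fin l) (hiJ : i ∈ J) (hjJ : j ∈ J) (hij : i ≠ j) (hgt : 2 < b i j)
    (lam : ℝ) (hlam : 1 < lam)
    (huniq : ∀ μ : ℝ,
      Module.End.HasEigenvalue (Matrix.toLin' (reflM l b j * reflM l b i)) μ →
        1 < μ → μ = lam)
    (vlam : Fin l → ℝ) (hv0 : vlam ≠ 0)
    (heig : (reflM l b j * reflM l b i).mulVec vlam = lam • vlam)
    (hvT : vlam ∈ closure (TJ l b ↑J)) :
    ∀ (a : Fin l → ℝ) (c0 : ℝ), (∀ k, 0 ≤ a k) → 0 ≤ c0 →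
      c0 • vlam + ∑ k ∈ (Finset.univ.erase i).erase j, a k • cvec l b k
        ∈ frontier (closure (TJ l b ↑J)) :=
  cone_subset_frontier_TJ_general l b hsym hge hBinv J i j hiJ hjJ hij lam hlam vlam hv0 heig hvT
end

section
/- Every real symmetric 3×3 matrix with all diagonal entries equal to 1 and all off-diagonal entries ≤ −1 has exactly one negative eigenvalue and two positive eigenvalues (counted with multiplicity); that is, it is invertible with signature (2, 1). -/
/-!
The determinant is negative: in its expansion every 2-cycle term is at least `1` and every
3-cycle term at most `-1`. The trace is `3`. Since the determinant and the trace are the product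
and the sum of the eigenvalues, an odd number of eigenvalues is negative, and not all three are.
-/

open Matrix Finset

theorem Matrix.det_fin_three_neg_of_diag_eq_one_of_offDiag_le_neg_one
    (A : Matrix (Fin 3) (Fin 3) ℝ) (hdiag : ∀ i, A i i = 1)
    (hoff : ∀ i k, i ≠ k → A i k ≤ -1) : A.det < 0 := by
  have pair (i j k : Fin 3) (hij : i ≠ j) (hjk : j ≠ k) : 1 ≤ A i j * A j k := by
    nlinarith [hoff i j hij, hoff j k hjk]
  have triple (i j k : Fin 3) (hij : i ≠ j) (hjk : j ≠ k) (hki : k ≠ i) :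
      A i j * A j k * A k i ≤ -1 := by
    nlinarith [pair i j k hij hjk, hoff k i hki]
  rw [det_fin_three, hdiag, hdiag, hdiag]
  linarith [pair 0 1 0 (by decide) (by decide), pair 0 2 0 (by decide) (by decide),
    pair 1 2 1 (by decide) (by decide), triple 0 1 2 (by decide) (by decide) (by decide),
    triple 0 2 1 (by decide) (by decide) (by decide)]

theorem Fin.card_neg_eq_one_and_card_pos_eq_two_of_prod_neg_of_sum_pos {e : Fin 3 → ℝ}
    (hprod : ∏ i, e i < 0) (hsum : 0 < ∑ i, e i) :
    #{k | e k < 0} = 1 ∧ #{k | 0 < e k} = 2 := by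
  rw [Fin.prod_univ_three, mul_neg_iff, mul_pos_iff, mul_neg_iff] at hprod
  rw [Fin.sum_univ_three] at hsum
  simp only [card_filter, Fin.sum_univ_three]
  constructor <;> split_ifs <;> first | rfl | grind

/-- **Three reflections always generate a Lorentzian group.**
Every real symmetric `3 × 3` matrix with diagonal entries `1` and off-diagonal entries
`≤ -1` is invertible and has exactly one negative eigenvalue and two positive
eigenvalues (with multiplicity), i.e. it has signature `(2, 1)`. -/
theorem lorentzian_three (A : Matrix (Fin 3) (Fin 3) ℝ)
    (hHerm : A.IsHermitian)
    (hdiag : ∀ i, A i i = 1)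
    (hoff : ∀ i k, i ≠ k → A i k ≤ -1) :
    A.det ≠ 0 ∧
    (Finset.univ.filter fun k => hHerm.eigenvalues k < 0).card = 1 ∧
    (Finset.univ.filter fun k => 0 < hHerm.eigenvalues k).card = 2 := by
  have hdet := A.det_fin_three_neg_of_diag_eq_one_of_offDiag_le_neg_one hdiag hoff
  have htrace : 0 < A.trace := by
    rw [trace_fin_three, hdiag, hdiag, hdiag]
    norm_num
  refine ⟨hdet.ne, Fin.card_neg_eq_one_and_card_pos_eq_two_of_prod_neg_of_sum_pos ?_ ?_⟩
  · simpa [hHerm.det_eq_prod_eigenvalues] using hdet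
  · simpa [hHerm.trace_eq_sum_eigenvalues] using htrace
end
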